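/- arXiv:2006.14836 — 5 statements merged into one kernel-verified Lean document; each statement's English description precedes it below -/
import Mathlib

section
/- Let m ≥ 1, δ ≥ 1, σ ∈ (0,1], and let Q_0, Q_1, …, Q_{δ−1} be nonnegative m×m real matrices each of whose row sums are at most 1. Let i_1, i_2, …, i_δ be indices in Fin m such that: (a) the i_1-th row sum of Q_0 is at most 1 − σ, and (b) for every q with 1 ≤ q ≤ δ−1, the entry [Q_q]_{i_{q+1}, i_q} is at least σ. Then the i_δ-th row sum of the left product Q_{δ−1}·Q_{δ−2}···Q_0 is at most 1 − σ^δ. -/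
open Filter Topology Matrix

/-- Left product `Q(T-1) * Q(T-2) * ⋯ * Q(0)` of a matrix sequence; `leftProd Q 0 = 1`. -/
noncomputable def leftProd {m : ℕ} (Q : ℕ → Matrix (Fin m) (Fin m) ℝ) :
    ℕ → Matrix (Fin m) (Fin m) ℝ
  | 0 => 1
  | T + 1 => Q T * leftProd Q T

lemma leftProd_nonneg {m : ℕ} (Q : ℕ → Matrix (Fin m) (Fin m) ℝ) (T : ℕ)
    (hn : ∀ q, q < T → ∀ i j, 0 ≤ Q q i j) :
    ∀ i j, 0 ≤ leftProd Q T i j := by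
  induction T with
  | zero =>
    intro i j
    simp [leftProd, Matrix.one_apply]
    split <;> norm_num
  | succ T ih =>
    intro i j
    have ih' := ih (fun q hq => hn q (hq.trans (Nat.lt_succ_self T)))
    simp only [leftProd, Matrix.mul_apply]
    exact Finset.sum_nonneg fun k _ =>
      mul_nonneg (hn T (Nat.lt_succ_self T) i k) (ih' k j)

lemma leftProd_row {m : ℕ} (Q : ℕ → Matrix (Fin m) (Fin m) ℝ) (T : ℕ)
    (hn : ∀ q, q < T → ∀ i j, 0 ≤ Q q i j)
    (hr : ∀ q, q < T → ∀ i, ∑ j, Q q i j ≤ 1) :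
    ∀ i, ∑ j, leftProd Q T i j ≤ 1 := by
  induction T with
  | zero =>
    intro i
    simp [leftProd, Matrix.one_apply]
  | succ T ih =>
    intro i
    have hn' : ∀ q, q < T → ∀ i j, 0 ≤ Q q i j :=
      fun q hq => hn q (hq.trans (Nat.lt_succ_self T))
    have ih' := ih hn' (fun q hq => hr q (hq.trans (Nat.lt_succ_self T)))
    have hP := leftProd_nonneg Q T hn'
    calc ∑ j, leftProd Q (T + 1) i j
        = ∑ k, Q T i k * ∑ j, leftProd Q T k j := by
          simp only [leftProd, Matrix.mul_apply]
          rw [Finset.sum_comm]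
          simp [Finset.mul_sum]
      _ ≤ ∑ k, Q T i k := by
          refine Finset.sum_le_sum fun k _ => ?_
          exact mul_le_of_le_one_right (hn T (Nat.lt_succ_self T) i k) (ih' k)
      _ ≤ 1 := hr T (Nat.lt_succ_self T) i

/-- Key contraction estimate: if `Q_0, …, Q_{δ-1}` are nonnegative sub-stochastic matrices,
the `i_1`-th row sum of `Q_0` is at most `1 - σ`, and `[Q_q]_{i_{q+1}, i_q} ≥ σ` for
`1 ≤ q ≤ δ-1`, then the `i_δ`-th row sum of the left product `Q_{δ-1} ⋯ Q_0` is at most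
`1 - σ^δ`. -/
theorem stmt2 {m : ℕ} (hm : 1 ≤ m) (δ : ℕ) (hδ : 1 ≤ δ)
    (σ : ℝ) (hσ0 : 0 < σ) (hσ1 : σ ≤ 1)
    (Q : ℕ → Matrix (Fin m) (Fin m) ℝ)
    (hnonneg : ∀ q, q < δ → ∀ i j, 0 ≤ Q q i j)
    (hrow : ∀ q, q < δ → ∀ i, ∑ j, Q q i j ≤ 1)
    (i : ℕ → Fin m)
    (ha : ∑ j, Q 0 (i 1) j ≤ 1 - σ)
    (hb : ∀ q, 1 ≤ q → q ≤ δ - 1 → σ ≤ Q q (i (q + 1)) (i q)) :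
    ∑ j, leftProd Q δ (i δ) j ≤ 1 - σ ^ δ := by
  have key : ∀ d, 1 ≤ d → d ≤ δ → ∑ j, leftProd Q d (i d) j ≤ 1 - σ ^ d := by
    intro d hd
    induction d, hd using Nat.le_induction with
    | base =>
      intro _
      have : leftProd Q 1 = Q 0 := by simp [leftProd]
      rw [this, pow_one]
      exact ha
    | succ d hd ih =>
      intro hdδ
      have hdδ' : d ≤ δ := le_trans (Nat.le_succ d) hdδ
      have ihd := ih (le_trans (Nat.le_succ d) hdδ)
      have hdlt : d < δ := lt_of_lt_of_le (Nat.lt_succ_self d) hdδ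
      have hn' : ∀ q, q < d → ∀ i j, 0 ≤ Q q i j :=
        fun q hq => hnonneg q (hq.trans hdlt)
      have hr' : ∀ q, q < d → ∀ i, ∑ j, Q q i j ≤ 1 :=
        fun q hq => hrow q (hq.trans hdlt)
      have hS := leftProd_row Q d hn' hr'
      have hP := leftProd_nonneg Q d hn'
      set a : Fin m → ℝ := fun k => Q d (i (d + 1)) k with ha_def
      have han : ∀ k, 0 ≤ a k := fun k => hnonneg d hdlt _ k
      have hasum : ∑ k, a k ≤ 1 := hrow d hdlt _
      have haσ : σ ≤ a (i d) := hb d hd (by omega)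
      have expand : ∑ j, leftProd Q (d + 1) (i (d + 1)) j
          = ∑ k, a k * ∑ j, leftProd Q d k j := by
        simp only [leftProd, Matrix.mul_apply]
        rw [Finset.sum_comm]
        simp [Finset.mul_sum, ha_def]
      rw [expand]
      have hmem : i d ∈ (Finset.univ : Finset (Fin m)) := Finset.mem_univ _
      rw [← Finset.add_sum_erase _ _ hmem]
      have h1 : a (i d) * ∑ j, leftProd Q d (i d) j ≤ a (i d) * (1 - σ ^ d) :=
        mul_le_mul_of_nonneg_left ihd (han _)
      have h2 : ∑ k ∈ Finset.univ.erase (i d), a k * ∑ j, leftProd Q d k j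
          ≤ ∑ k ∈ Finset.univ.erase (i d), a k :=
        Finset.sum_le_sum fun k _ => mul_le_of_le_one_right (han k) (hS k)
      have h3 : a (i d) + ∑ k ∈ Finset.univ.erase (i d), a k = ∑ k, a k :=
        Finset.add_sum_erase _ _ hmem
      have h4 : σ * σ ^ d ≤ a (i d) * σ ^ d :=
        mul_le_mul_of_nonneg_right haσ (pow_nonneg hσ0.le d)
      have hσd : 0 ≤ σ ^ d := pow_nonneg hσ0.le d
      calc a (i d) * ∑ j, leftProd Q d (i d) j
            + ∑ k ∈ Finset.univ.erase (i d), a k * ∑ j, leftProd Q d k j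
          ≤ a (i d) * (1 - σ ^ d) + ∑ k ∈ Finset.univ.erase (i d), a k := by
            linarith
        _ = (∑ k, a k) - a (i d) * σ ^ d := by ring_nf; linarith [h3]
        _ ≤ 1 - σ ^ (d + 1) := by rw [pow_succ']; linarith
  exact key δ hδ le_rfl
end

section
/- Let m, k ≥ 1 and γ ∈ ℝ. Let F be a nonnegative m×k real matrix and H a nonnegative m×m real matrix such that the block matrix [F H] is row-stochastic, i.e., for every row i, Σ_j F_{ij} + Σ_j H_{ij} = 1, and suppose I_m − H is invertible. Let F' (an m×k matrix) and H' (an m×m matrix) be obtained by row selection: for each row i, either both the i-th row of F' and the i-th row of H' are zero, or the i-th row of F' equals the i-th row of F and the i-th row of H' equals the i-th row of H. Let N be the m×m diagonal matrix whose i-th diagonal entry is the i-th row sum of [F' H'], i.e., N_{ii} = Σ_j F'_{ij} + Σ_j H'_{ij}, and set Q = I_m − γ(N − H'). Then (I_m − Q)·(I_m − H)^{−1}·F = γ·F'. -/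
open Matrix

/-- Matrix identity (28) of the paper: with `[F H]` nonnegative and row-stochastic,
`I - H` invertible, `[F' H']` a row selection of `[F H]` (each row is either kept or zeroed),
`N` the diagonal matrix of row sums of `[F' H']`, and `Q = I - γ(N - H')`, one has
`(I - Q)(I - H)⁻¹ F = γ F'`. -/
theorem stmt6 {m k : ℕ} (hm : 1 ≤ m) (hk : 1 ≤ k) (γ : ℝ)
    (F : Matrix (Fin m) (Fin k) ℝ) (H : Matrix (Fin m) (Fin m) ℝ)
    (hF : ∀ i j, 0 ≤ F i j) (hH : ∀ i j, 0 ≤ H i j)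
    (hstoch : ∀ i, (∑ j, F i j) + ∑ j, H i j = 1)
    (hinv : IsUnit (1 - H))
    (F' : Matrix (Fin m) (Fin k) ℝ) (H' : Matrix (Fin m) (Fin m) ℝ)
    (hsel : ∀ i, (F' i = 0 ∧ H' i = 0) ∨ (F' i = F i ∧ H' i = H i))
    (N : Matrix (Fin m) (Fin m) ℝ)
    (hN : N = Matrix.diagonal fun i => (∑ j, F' i j) + ∑ j, H' i j)
    (Q : Matrix (Fin m) (Fin m) ℝ)
    (hQ : Q = 1 - γ • (N - H')) :
    (1 - Q) * (1 - H)⁻¹ * F = γ • F' := by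
  set s : Fin m → ℝ := fun i => (∑ j, F' i j) + ∑ j, H' i j with hs
  have hNH : N - H' = Matrix.diagonal s * (1 - H) := by
    ext i j
    rw [Matrix.mul_apply, Matrix.sub_apply]
    simp only [Matrix.diagonal_apply, ite_mul, zero_mul, Finset.sum_ite_eq, Finset.mem_univ,
      if_true]
    rcases hsel i with ⟨hF0, hH0⟩ | ⟨hFe, hHe⟩
    · have hsi : s i = 0 := by simp [hs, hF0, hH0]
      have hH'ij : H' i j = 0 := by rw [hH0]; rfl
      rcases eq_or_ne i j with rfl | hij
      · simp [hN, Matrix.diagonal_apply, hsi, hH'ij]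
      · simp [hN, Matrix.diagonal_apply, hij, hH'ij, hsi]
    · have hsi : s i = 1 := by simp only [hs, hFe, hHe]; exact hstoch i
      have hH'ij : H' i j = H i j := by rw [hHe]
      rcases eq_or_ne i j with rfl | hij
      · simp [hN, Matrix.diagonal_apply, hsi, hH'ij]
      · simp [hN, Matrix.diagonal_apply, hij, hH'ij, hsi]
  have hF' : Matrix.diagonal s * F = F' := by
    ext i j
    rcases hsel i with ⟨hF0, hH0⟩ | ⟨hFe, hHe⟩
    · have hsi : s i = 0 := by simp [hs, hF0, hH0]
      simp [Matrix.diagonal_mul, hsi, hF0]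
    · have hsi : s i = 1 := by simp only [hs, hFe, hHe]; exact hstoch i
      simp [Matrix.diagonal_mul, hsi, hFe]
  have hdet : IsUnit (1 - H).det := (Matrix.isUnit_iff_isUnit_det _).mp hinv
  have hmulinv : (1 - H) * (1 - H)⁻¹ = 1 := Matrix.mul_nonsing_inv _ hdet
  calc (1 - Q) * (1 - H)⁻¹ * F
      = (γ • (Matrix.diagonal s * (1 - H))) * (1 - H)⁻¹ * F := by rw [hQ, sub_sub_cancel, hNH]
    _ = γ • (Matrix.diagonal s * ((1 - H) * (1 - H)⁻¹) * F) := by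
        simp [Matrix.smul_mul, Matrix.mul_assoc]
    _ = γ • F' := by rw [hmulinv, Matrix.mul_one, hF']
end

section
/- Let m ≥ 1 and let H be a nonnegative m×m real matrix whose row sums are all at most 1. Suppose that for every index i ∈ Fin m there exist indices i = j_0, j_1, …, j_s in Fin m such that H_{j_q, j_{q+1}} > 0 for every q with 0 ≤ q ≤ s−1 and the j_s-th row sum of H is strictly less than 1. Then the powers H^t converge entrywise to the zero matrix as t → ∞, and I_m − H is invertible. -/
open Filter Topology Matrix

section Aux

variable {m : ℕ} (H : Matrix (Fin m) (Fin m) ℝ)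

private lemma aux_pow_nonneg (hnonneg : ∀ i j, 0 ≤ H i j) :
    ∀ k i j, 0 ≤ (H ^ k) i j := by
  intro k
  induction k with
  | zero =>
    intro i j
    rw [pow_zero]
    by_cases h : i = j <;> simp [Matrix.one_apply, h]
  | succ k ih =>
    intro i j
    rw [pow_succ, Matrix.mul_apply]
    exact Finset.sum_nonneg fun p _ => mul_nonneg (ih i p) (hnonneg p j)

private lemma aux_rowsum_mul (A B : Matrix (Fin m) (Fin m) ℝ) (i : Fin m) :
    ∑ j, (A * B) i j = ∑ p, A i p * ∑ j, B p j := by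
  simp only [Matrix.mul_apply, Finset.mul_sum]
  exact Finset.sum_comm

private lemma aux_row_le_one (hnonneg : ∀ i j, 0 ≤ H i j) (hrow : ∀ i, ∑ j, H i j ≤ 1) :
    ∀ k i, ∑ j, (H ^ k) i j ≤ 1 := by
  intro k
  induction k with
  | zero =>
    intro i
    simp [Matrix.one_apply]
  | succ k ih =>
    intro i
    rw [pow_succ, aux_rowsum_mul]
    calc ∑ p, (H ^ k) i p * ∑ j, H p j
        ≤ ∑ p, (H ^ k) i p * 1 := by
          refine Finset.sum_le_sum fun p _ => ?_
          exact mul_le_mul_of_nonneg_left (hrow p) (aux_pow_nonneg H hnonneg k i p)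
      _ = ∑ p, (H ^ k) i p := by simp
      _ ≤ 1 := ih i

private lemma aux_anti (hnonneg : ∀ i j, 0 ≤ H i j) (hrow : ∀ i, ∑ j, H i j ≤ 1) :
    ∀ k l, k ≤ l → ∀ i, ∑ j, (H ^ l) i j ≤ ∑ j, (H ^ k) i j := by
  intro k l hkl
  induction l, hkl using Nat.le_induction with
  | base => intro i; exact le_rfl
  | succ l hkl ih =>
    intro i
    refine le_trans ?_ (ih i)
    rw [pow_succ, aux_rowsum_mul]
    calc ∑ p, (H ^ l) i p * ∑ j, H p j
        ≤ ∑ p, (H ^ l) i p * 1 := by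
          refine Finset.sum_le_sum fun p _ => ?_
          exact mul_le_mul_of_nonneg_left (hrow p) (aux_pow_nonneg H hnonneg l i p)
      _ = ∑ j, (H ^ l) i j := by simp

private lemma aux_path (hnonneg : ∀ i j, 0 ≤ H i j) (hrow : ∀ i, ∑ j, H i j ≤ 1) :
    ∀ (s : ℕ) (jj : ℕ → Fin m), (∀ q, q < s → 0 < H (jj q) (jj (q + 1))) →
    (∑ col, H (jj s) col < 1) → ∑ j, (H ^ (s + 1)) (jj 0) j < 1 := by
  intro s
  induction s with
  | zero =>
    intro jj _ hdef
    simpa [pow_one] using hdef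
  | succ s ih =>
    intro jj hpos hdef
    have key : ∑ j, (H ^ (s + 1)) (jj 1) j < 1 := by
      refine ih (fun q => jj (q + 1)) (fun q hq => ?_) ?_
      · exact hpos (q + 1) (by omega)
      · exact hdef
    have h1 : 0 < H (jj 0) (jj 1) := hpos 0 (by omega)
    rw [show s + 1 + 1 = 1 + (s + 1) by ring, pow_add, pow_one, aux_rowsum_mul]
    calc ∑ p, H (jj 0) p * ∑ j, (H ^ (s + 1)) p j
        < ∑ p, H (jj 0) p := by
          refine Finset.sum_lt_sum (fun p _ => ?_) ⟨jj 1, Finset.mem_univ _, ?_⟩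
          · exact mul_le_of_le_one_right (hnonneg _ _)
              (aux_row_le_one H hnonneg hrow (s + 1) p)
          · exact mul_lt_of_lt_one_right h1 key
      _ ≤ 1 := hrow (jj 0)

end Aux

/-- Stability/invertibility for sub-stochastic matrices: if `H` is nonnegative with all row
sums at most `1`, and from every index there is a directed path through strictly positive
entries of `H` to an index whose row sum is strictly less than `1`, then `H^t → 0` entrywise
and `I - H` is invertible. -/
theorem stmt9 {m : ℕ} (hm : 1 ≤ m)
    (H : Matrix (Fin m) (Fin m) ℝ)
    (hnonneg : ∀ i j, 0 ≤ H i j)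
    (hrow : ∀ i, ∑ j, H i j ≤ 1)
    (hpath : ∀ i : Fin m, ∃ (s : ℕ) (jj : ℕ → Fin m), jj 0 = i ∧
      (∀ q, q < s → 0 < H (jj q) (jj (q + 1))) ∧ ∑ col, H (jj s) col < 1) :
    (∀ a b : Fin m, Tendsto (fun t => (H ^ t) a b) atTop (𝓝 0)) ∧ IsUnit (1 - H) := by
  haveI : Nonempty (Fin m) := ⟨⟨0, hm⟩⟩
  choose s jj hjj0 hjjpos hjjdef using hpath
  set N : ℕ := (Finset.univ.sup s) + 1 with hN
  have hNpos : 0 < N := Nat.succ_pos _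
  have hrowN : ∀ i, ∑ j, (H ^ N) i j < 1 := by
    intro i
    have h1 : s i + 1 ≤ N := by
      have := Finset.le_sup (Finset.mem_univ i) (f := s)
      omega
    refine lt_of_le_of_lt (aux_anti H hnonneg hrow _ _ h1 i) ?_
    have := aux_path H hnonneg hrow (s i) (jj i) (hjjpos i) (hjjdef i)
    rwa [hjj0 i] at this
  set c : ℝ := Finset.univ.sup' Finset.univ_nonempty (fun i => ∑ j, (H ^ N) i j) with hc
  have hc1 : c < 1 := by
    rw [hc, Finset.sup'_lt_iff]
    exact fun i _ => hrowN i
  have hc0 : 0 ≤ c := by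
    refine le_trans ?_ (Finset.le_sup' (fun i => ∑ j, (H ^ N) i j)
      (Finset.mem_univ (Classical.arbitrary (Fin m))))
    exact Finset.sum_nonneg fun j _ => aux_pow_nonneg H hnonneg N _ j
  have hcle : ∀ i, ∑ j, (H ^ N) i j ≤ c := fun i =>
    Finset.le_sup' (fun i => ∑ j, (H ^ N) i j) (Finset.mem_univ i)
  -- row sums of H^(N*t) are at most c^t
  have hpow : ∀ t i, ∑ j, (H ^ (N * t)) i j ≤ c ^ t := by
    intro t
    induction t with
    | zero => intro i; simp [Matrix.one_apply]
    | succ t ih =>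
      intro i
      have : N * (t + 1) = N * t + N := by ring
      rw [this, pow_add, aux_rowsum_mul]
      calc ∑ p, (H ^ (N * t)) i p * ∑ j, (H ^ N) p j
          ≤ ∑ p, (H ^ (N * t)) i p * c :=
            Finset.sum_le_sum fun p _ => mul_le_mul_of_nonneg_left (hcle p)
              (aux_pow_nonneg H hnonneg _ i p)
        _ = (∑ p, (H ^ (N * t)) i p) * c := by rw [Finset.sum_mul]
        _ ≤ c ^ t * c := mul_le_mul_of_nonneg_right (ih i) hc0
        _ = c ^ (t + 1) := by ring
  -- entrywise bound
  have hbound : ∀ t (a b : Fin m), (H ^ t) a b ≤ c ^ (t / N) := by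
    intro t a b
    have h1 : (H ^ t) a b ≤ ∑ j, (H ^ t) a j :=
      Finset.single_le_sum (fun j _ => aux_pow_nonneg H hnonneg t a j) (Finset.mem_univ b)
    have h2 : N * (t / N) ≤ t := Nat.mul_div_le t N
    calc (H ^ t) a b ≤ ∑ j, (H ^ t) a j := h1
      _ ≤ ∑ j, (H ^ (N * (t / N))) a j := aux_anti H hnonneg hrow _ _ h2 a
      _ ≤ c ^ (t / N) := hpow _ a
  have hdiv : Tendsto (fun t : ℕ => t / N) atTop atTop := by
    refine tendsto_atTop_atTop.mpr fun b => ⟨b * N, fun t ht => ?_⟩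
    exact (Nat.le_div_iff_mul_le hNpos).mpr ht
  have htends : ∀ a b : Fin m, Tendsto (fun t => (H ^ t) a b) atTop (𝓝 0) := by
    intro a b
    refine squeeze_zero (fun t => aux_pow_nonneg H hnonneg t a b) (fun t => hbound t a b) ?_
    exact (tendsto_pow_atTop_nhds_zero_of_lt_one hc0 hc1).comp hdiv
  refine ⟨htends, ?_⟩
  -- invertibility
  rw [Matrix.isUnit_iff_isUnit_det, isUnit_iff_ne_zero]
  intro hdet
  obtain ⟨v, hv, hmul⟩ := (Matrix.exists_mulVec_eq_zero_iff).mpr hdet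
  have hHv : H.mulVec v = v := by
    have h : (1 - H).mulVec v = v - H.mulVec v := by
      rw [Matrix.sub_mulVec, Matrix.one_mulVec]
    rw [h] at hmul
    exact (sub_eq_zero.mp hmul).symm
  have hHtv : ∀ t, (H ^ t).mulVec v = v := by
    intro t
    induction t with
    | zero => simp [Matrix.one_mulVec]
    | succ t ih =>
      rw [pow_succ, ← Matrix.mulVec_mulVec, hHv, ih]
  obtain ⟨a, ha⟩ := Function.ne_iff.mp hv
  have hconst : ∀ t : ℕ, ∑ b, (H ^ t) a b * v b = v a := by
    intro t
    have := congrFun (hHtv t) a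
    simpa [Matrix.mulVec, dotProduct] using this
  have hlim : Tendsto (fun t => ∑ b, (H ^ t) a b * v b) atTop (𝓝 0) := by
    have : Tendsto (fun t => ∑ b, (H ^ t) a b * v b) atTop
        (𝓝 (∑ b : Fin m, (0 : ℝ) * v b)) := by
      refine tendsto_finset_sum _ fun b _ => ?_
      exact (htends a b).mul_const (v b)
    simpa using this
  have : v a = 0 := by
    have h2 : Tendsto (fun _ : ℕ => v a) atTop (𝓝 (v a)) := tendsto_const_nhds
    have h3 : (fun t : ℕ => ∑ b, (H ^ t) a b * v b) = fun _ => v a :=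
      funext hconst
    rw [h3] at hlim
    exact tendsto_nhds_unique h2 hlim
  exact ha this
end

section
/- Let m, k ≥ 1, let γ ∈ ℝ with 0 < γ ≤ 1, let H be a nonnegative m×m real matrix whose row sums are all at most 1 and whose powers H^t converge entrywise to the zero matrix, let F be an m×k real matrix, and let p_a ∈ ℝ^k. Set Q = (1−γ)·I_m + γ·H. Then the powers Q^t converge entrywise to the zero matrix, I_m − H is invertible, and for every initial vector p̃(0) ∈ ℝ^m, the iteration p̃(t+1) = γ·F·p_a + Q·p̃(t) converges to (I_m − H)^{−1}·F·p_a. -/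
/-!
Write `Q = (1 - γ) I + γ H`. Since `H ^ t → 0`, some power has norm `≤ 1/2`, so the powers of `H`
decay geometrically, `‖H ^ t‖ ≤ C rᵗ` with `r < 1`. Expanding `Q ^ t` by the binomial theorem
then gives `‖Q ^ t‖ ≤ C (1 - γ + γ r)ᵗ → 0`. Invertibility of `I - H` follows from that of
`I - H ^ T = (I - H)(I + H + ⋯ + H ^ (T - 1))` when `‖H ^ T‖ < 1`. Finally `(I - H)⁻¹ F p_a` is a
fixed point of the affine iteration, and the error after `t` steps is `Q ^ t` applied to the
initial error.
-/

open Filter Topology Matrix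

section SeminormedRing

variable {A : Type*} [SeminormedRing A]

theorem norm_pow_mul_le (a b : A) (q : ℕ) : ‖a ^ q * b‖ ≤ ‖a‖ ^ q * ‖b‖ := by
  induction q with
  | zero => simp
  | succ q ih =>
    calc ‖a ^ (q + 1) * b‖ = ‖a * (a ^ q * b)‖ := by rw [pow_succ', mul_assoc]
      _ ≤ ‖a‖ * (‖a‖ ^ q * ‖b‖) := (norm_mul_le _ _).trans (by gcongr)
      _ = ‖a‖ ^ (q + 1) * ‖b‖ := by ring

/- With `‖x ^ T‖ ≤ 1/2` and `n = T q + s`, `s < T`, we get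
`‖x ^ n‖ ≤ 2 ^ (-q) ∑_{s<T} ‖x ^ s‖ ≤ 2 rⁿ ∑_{s<T} ‖x ^ s‖` for `r = 2 ^ (-1/T)`. -/
theorem exists_norm_pow_le_geometric_of_tendsto_pow {x : A}
    (hx : Tendsto (x ^ ·) atTop (𝓝 0)) :
    ∃ C r : ℝ, 0 ≤ r ∧ r < 1 ∧ ∀ n, ‖x ^ n‖ ≤ C * r ^ n := by
  obtain ⟨T, hT, hxT⟩ : ∃ T, 0 < T ∧ ‖x ^ T‖ ≤ 1 / 2 :=
    ((eventually_gt_atTop 0).and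
      ((tendsto_norm_zero.comp hx).eventually (ge_mem_nhds (by norm_num)))).exists
  set r : ℝ := (1 / 2) ^ (T⁻¹ : ℝ)
  have hr0 : 0 ≤ r := by positivity
  have hr1 : r < 1 := Real.rpow_lt_one (by norm_num) (by norm_num) (by positivity)
  have hrT : r ^ T = 1 / 2 := Real.rpow_inv_natCast_pow (by norm_num) hT.ne'
  set M := ∑ s ∈ Finset.range T, ‖x ^ s‖
  refine ⟨2 * M, r, hr0, hr1, fun n => ?_⟩
  obtain ⟨q, s, hs, rfl⟩ : ∃ q s, s < T ∧ n = T * q + s :=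
    ⟨n / T, n % T, Nat.mod_lt _ hT, (Nat.div_add_mod n T).symm⟩
  have hxs : ‖x ^ s‖ ≤ M :=
    Finset.single_le_sum (fun _ _ => norm_nonneg _) (Finset.mem_range.2 hs)
  have hrn : (1 / 2 : ℝ) ^ (q + 1) ≤ r ^ (T * q + s) := by
    rw [← hrT, ← pow_mul]
    exact pow_le_pow_of_le_one hr0 hr1.le (by nlinarith)
  calc ‖x ^ (T * q + s)‖ = ‖(x ^ T) ^ q * x ^ s‖ := by rw [pow_add, pow_mul]
    _ ≤ ‖x ^ T‖ ^ q * ‖x ^ s‖ := norm_pow_mul_le _ _ _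
    _ ≤ (1 / 2) ^ q * M := by gcongr
    _ = 2 * M * (1 / 2) ^ (q + 1) := by ring
    _ ≤ 2 * M * r ^ (T * q + s) := by gcongr

end SeminormedRing

section NormedAlgebra

variable {A : Type*} [SeminormedRing A] [NormedAlgebra ℝ A]

theorem algebraMap_add_smul_pow (a b : ℝ) (x : A) (n : ℕ) :
    (algebraMap ℝ A a + b • x) ^ n =
      ∑ j ∈ Finset.range (n + 1), (a ^ j * b ^ (n - j) * n.choose j) • x ^ (n - j) := by
  rw [(Algebra.commute_algebraMap_left a (b • x)).add_pow]
  refine Finset.sum_congr rfl fun j _ => ?_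
  rw [← map_pow, smul_pow, ← map_natCast (algebraMap ℝ A), ← Algebra.commutes, ← mul_assoc,
    ← map_mul, ← Algebra.smul_def, smul_smul]
  congr 1
  ring

theorem norm_algebraMap_add_smul_pow_le {x : A} {C r : ℝ} (hx : ∀ n, ‖x ^ n‖ ≤ C * r ^ n)
    (a b : ℝ) (n : ℕ) : ‖(algebraMap ℝ A a + b • x) ^ n‖ ≤ C * (|a| + |b| * r) ^ n := by
  rw [algebraMap_add_smul_pow, add_pow, Finset.mul_sum]
  refine (norm_sum_le _ _).trans (Finset.sum_le_sum fun j _ => ?_)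
  calc ‖(a ^ j * b ^ (n - j) * n.choose j) • x ^ (n - j)‖
      ≤ |a ^ j * b ^ (n - j) * n.choose j| * (C * r ^ (n - j)) := by
        rw [norm_smul, Real.norm_eq_abs]
        exact mul_le_mul_of_nonneg_left (hx _) (abs_nonneg _)
    _ = C * (|a| ^ j * (|b| * r) ^ (n - j) * n.choose j) := by
        rw [abs_mul, abs_mul, abs_pow, abs_pow, Nat.abs_cast, mul_pow]
        ring

theorem tendsto_algebraMap_add_smul_pow {x : A} (hx : Tendsto (x ^ ·) atTop (𝓝 0)) {a b : ℝ}
    (ha : |a| < 1) (hab : |a| + |b| ≤ 1) :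
    Tendsto ((algebraMap ℝ A a + b • x) ^ ·) atTop (𝓝 0) := by
  obtain ⟨C, r, hr0, hr1, hC⟩ := exists_norm_pow_le_geometric_of_tendsto_pow hx
  have hρ : |a| + |b| * r < 1 := by nlinarith [abs_nonneg b]
  refine squeeze_zero_norm (norm_algebraMap_add_smul_pow_le hC a b) ?_
  simpa using (tendsto_pow_atTop_nhds_zero_of_lt_one (by positivity) hρ).const_mul C

end NormedAlgebra

theorem isUnit_one_sub_of_tendsto_pow {A : Type*} [NormedRing A] [HasSummableGeomSeries A]
    {x : A} (hx : Tendsto (x ^ ·) atTop (𝓝 0)) : IsUnit (1 - x) := by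
  obtain ⟨N, hN⟩ := ((tendsto_norm_zero.comp hx).eventually (gt_mem_nhds one_pos)).exists
  have hcomm : Commute (1 - x) (∑ i ∈ Finset.range N, x ^ i) :=
    Commute.sum_right _ _ _ fun i _ => (Commute.one_left _).sub_left (Commute.self_pow x i)
  have hprod : IsUnit ((1 - x) * ∑ i ∈ Finset.range N, x ^ i) := by
    rw [mul_neg_geom_sum]
    exact isUnit_one_sub_of_norm_lt_one hN
  exact (hcomm.isUnit_mul_iff.1 hprod).1

theorem Matrix.tendsto_of_affine_iterate {n R : Type*} [Fintype n] [DecidableEq n] [Ring R]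
    [TopologicalSpace R] [IsTopologicalRing R] {Q : Matrix n n R}
    (hQ : Tendsto (Q ^ ·) atTop (𝓝 0)) {b q : n → R}
    (hq : b + Q *ᵥ q = q) {p : ℕ → n → R} (hp : ∀ t, p (t + 1) = b + Q *ᵥ p t) :
    Tendsto p atTop (𝓝 q) := by
  have herr : ∀ t, p t = q + (Q ^ t) *ᵥ (p 0 - q) := by
    intro t
    induction t with
    | zero => simp
    | succ t ih =>
      rw [hp t, ih, pow_succ', ← mulVec_mulVec, mulVec_add, ← add_assoc, hq]
  have hmulVec : Tendsto (fun M : Matrix n n R => M *ᵥ (p 0 - q)) (𝓝 0) (𝓝 0) :=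
    (continuous_id.matrix_mulVec continuous_const).tendsto' 0 0 (zero_mulVec _)
  rw [funext herr]
  simpa using tendsto_const_nhds.add (hmulVec.comp hQ)

section LinftyOp

attribute [local instance] Matrix.linftyOpNormedRing Matrix.linftyOpNormedAlgebra

variable {n : Type*} [Fintype n] [DecidableEq n]

theorem Matrix.isUnit_one_sub_of_tendsto_pow {H : Matrix n n ℝ}
    (hH : Tendsto (H ^ ·) atTop (𝓝 0)) : IsUnit (1 - H) :=
  _root_.isUnit_one_sub_of_tendsto_pow hH

theorem Matrix.tendsto_smul_one_add_smul_pow {H : Matrix n n ℝ}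
    (hH : Tendsto (H ^ ·) atTop (𝓝 0)) {γ : ℝ} (hγ0 : 0 < γ) (hγ1 : γ ≤ 1) :
    Tendsto (((1 - γ) • (1 : Matrix n n ℝ) + γ • H) ^ ·) atTop (𝓝 0) := by
  rw [← Algebra.algebraMap_eq_smul_one]
  exact tendsto_algebraMap_add_smul_pow hH (by rw [abs_of_nonneg (by linarith)]; linarith)
    (by rw [abs_of_nonneg (by linarith), abs_of_pos hγ0]; linarith)

end LinftyOp

theorem stmt10_general {m k : ℕ}
    (γ : ℝ) (hγ0 : 0 < γ) (hγ1 : γ ≤ 1)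
    (H : Matrix (Fin m) (Fin m) ℝ)
    (hHpow : ∀ a b : Fin m, Tendsto (fun t => (H ^ t) a b) atTop (𝓝 0))
    (F : Matrix (Fin m) (Fin k) ℝ) (p_a : Fin k → ℝ)
    (Q : Matrix (Fin m) (Fin m) ℝ)
    (hQ : Q = (1 - γ) • (1 : Matrix (Fin m) (Fin m) ℝ) + γ • H) :
    (∀ a b : Fin m, Tendsto (fun t => (Q ^ t) a b) atTop (𝓝 0)) ∧
      IsUnit (1 - H) ∧
      ∀ p : ℕ → Fin m → ℝ, (∀ t, p (t + 1) = γ • (F *ᵥ p_a) + Q *ᵥ p t) →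
        ∀ i, Tendsto (fun t => p t i) atTop (𝓝 ((((1 - H)⁻¹ * F) *ᵥ p_a) i)) := by
  have hH : Tendsto (H ^ ·) atTop (𝓝 0) :=
    tendsto_pi_nhds.2 fun a => tendsto_pi_nhds.2 (hHpow a)
  have hQpow : Tendsto (Q ^ ·) atTop (𝓝 0) := by
    rw [hQ]
    exact Matrix.tendsto_smul_one_add_smul_pow hH hγ0 hγ1
  have hunit : IsUnit (1 - H) := Matrix.isUnit_one_sub_of_tendsto_pow hH
  refine ⟨fun a b => tendsto_pi_nhds.1 (tendsto_pi_nhds.1 hQpow a) b, hunit, fun p hp i => ?_⟩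
  set q := ((1 - H)⁻¹ * F) *ᵥ p_a
  have hq : (1 - H) *ᵥ q = F *ᵥ p_a := by
    rw [mulVec_mulVec, ← Matrix.mul_assoc, mul_nonsing_inv _ ((isUnit_iff_isUnit_det _).1 hunit),
      Matrix.one_mul]
  have hfix : γ • (F *ᵥ p_a) + Q *ᵥ q = q := by
    rw [← hq, hQ, sub_mulVec, add_mulVec, smul_mulVec, smul_mulVec, one_mulVec, smul_sub,
      sub_smul, one_smul]
    abel
  exact tendsto_pi_nhds.1 (tendsto_of_affine_iterate hQpow hfix hp) i

/-- Attack-free convergence of the consensus-based DILOC iteration: if `H` is nonnegative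
with row sums at most `1` and `H^t → 0` entrywise, `0 < γ ≤ 1`, and
`Q = (1-γ) I + γ H`, then `Q^t → 0` entrywise, `I - H` is invertible, and for every initial
vector the iteration `p̃(t+1) = γ F p_a + Q p̃(t)` converges to `(I - H)⁻¹ F p_a`. -/
theorem stmt10 {m k : ℕ} (hm : 1 ≤ m) (hk : 1 ≤ k)
    (γ : ℝ) (hγ0 : 0 < γ) (hγ1 : γ ≤ 1)
    (H : Matrix (Fin m) (Fin m) ℝ)
    (hnonneg : ∀ i j, 0 ≤ H i j) (hrow : ∀ i, ∑ j, H i j ≤ 1)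
    (hHpow : ∀ a b : Fin m, Tendsto (fun t => (H ^ t) a b) atTop (𝓝 0))
    (F : Matrix (Fin m) (Fin k) ℝ) (p_a : Fin k → ℝ)
    (Q : Matrix (Fin m) (Fin m) ℝ)
    (hQ : Q = (1 - γ) • (1 : Matrix (Fin m) (Fin m) ℝ) + γ • H) :
    (∀ a b : Fin m, Tendsto (fun t => (Q ^ t) a b) atTop (𝓝 0)) ∧
      IsUnit (1 - H) ∧
      ∀ p : ℕ → Fin m → ℝ, (∀ t, p (t + 1) = γ • (F *ᵥ p_a) + Q *ᵥ p t) →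
        ∀ i, Tendsto (fun t => p t i) atTop (𝓝 ((((1 - H)⁻¹ * F) *ᵥ p_a) i)) :=
  stmt10_general γ hγ0 hγ1 H hHpow F p_a Q hQ
end

section
/- Let m, k ≥ 1, γ ∈ ℝ, let F be an m×k real matrix and H an m×m real matrix with I_m − H invertible, and let F' (m×k) and H' (m×m) be matrices, N an m×m diagonal matrix with N_{ii} = Σ_j F'_{ij} + Σ_j H'_{ij}, and Q = I_m − γ(N − H'), such that for each row i either both the i-th rows of F' and H' are zero, or they equal the i-th rows of F and H respectively, and such that [F H] is row-stochastic (Σ_j F_{ij} + Σ_j H_{ij} = 1 for all i). Then for every p_a ∈ ℝ^k, the vector p* := (I_m − H)^{−1}·F·p_a satisfies γ·F'·p_a + Q·p* = p*. -/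
open Matrix

/-- The true sensor locations are a fixed point of every attacked AS-DILOC update: with
`[F H]` row-stochastic, `I - H` invertible, `[F' H']` a row selection of `[F H]` (each row is
either kept or zeroed), `N` the diagonal matrix of row sums of `[F' H']`, and
`Q = I - γ(N - H')`, the vector `p* = (I - H)⁻¹ F p_a` satisfies `γ F' p_a + Q p* = p*`. -/
theorem stmt11 {m k : ℕ} (hm : 1 ≤ m) (hk : 1 ≤ k) (γ : ℝ)
    (F : Matrix (Fin m) (Fin k) ℝ) (H : Matrix (Fin m) (Fin m) ℝ)
    (hinv : IsUnit (1 - H))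
    (hstoch : ∀ i, (∑ j, F i j) + ∑ j, H i j = 1)
    (F' : Matrix (Fin m) (Fin k) ℝ) (H' : Matrix (Fin m) (Fin m) ℝ)
    (hsel : ∀ i, (F' i = 0 ∧ H' i = 0) ∨ (F' i = F i ∧ H' i = H i))
    (N : Matrix (Fin m) (Fin m) ℝ)
    (hN : N = Matrix.diagonal fun i => (∑ j, F' i j) + ∑ j, H' i j)
    (Q : Matrix (Fin m) (Fin m) ℝ)
    (hQ : Q = 1 - γ • (N - H'))
    (p_a : Fin k → ℝ) :
    γ • (F' *ᵥ p_a) + Q *ᵥ (((1 - H)⁻¹ * F) *ᵥ p_a) = ((1 - H)⁻¹ * F) *ᵥ p_a := by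
  set p : Fin m → ℝ := ((1 - H)⁻¹ * F) *ᵥ p_a with hp
  have hdet : IsUnit (1 - H).det := (Matrix.isUnit_iff_isUnit_det _).mp hinv
  have hfix : (1 - H) *ᵥ p = F *ᵥ p_a := by
    rw [hp, Matrix.mulVec_mulVec, ← Matrix.mul_assoc,
      Matrix.mul_nonsing_inv _ hdet, Matrix.one_mul]
  have key : F' *ᵥ p_a = (N - H') *ᵥ p := by
    funext i
    have hfi := congrFun hfix i
    rcases hsel i with ⟨hF0, hH0⟩ | ⟨hFe, hHe⟩
    · have hNii : (∑ j, F' i j) + ∑ j, H' i j = 0 := by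
        simp [hF0, hH0]
      simp [Matrix.sub_mulVec, Matrix.mulVec, dotProduct, hF0, hH0, hN,
        Matrix.diagonal, Finset.sum_ite_eq, hNii]
    · have hNii : (∑ j, F' i j) + ∑ j, H' i j = 1 := by
        rw [hFe, hHe]; exact hstoch i
      have h1 : ((N - H') *ᵥ p) i = p i - (H' *ᵥ p) i := by
        simp [Matrix.sub_mulVec, Matrix.mulVec, dotProduct, hN,
          Matrix.diagonal, hNii, sub_mul, Finset.sum_sub_distrib, ite_mul,
          Finset.sum_ite_eq]
      have h2 : ((1 - H) *ᵥ p) i = p i - (H *ᵥ p) i := by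
        simp [Matrix.sub_mulVec]
      have h3 : (H' *ᵥ p) i = (H *ᵥ p) i := by
        simp [Matrix.mulVec, dotProduct, hHe]
      rw [h1, h3, ← h2, hfi]
      simp [Matrix.mulVec, dotProduct, hFe]
  rw [hQ, Matrix.sub_mulVec, Matrix.smul_mulVec, Matrix.one_mulVec, key]
  abel
end
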